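/- arXiv:1002.0056 — 5 statements merged into one kernel-verified Lean document; each statement's English description precedes it below -/
import Mathlib

section
/- For all integers d ≥ 1 and k ≥ 1, A_{d,k} = d! · B_{d+1}(k), where A_{d,k} is the Eulerian number and B_{d+1} is the cardinal B-spline of order d+1. -/
/-!
Write `∇f(x) = f(x) - f(x - 1)` and `x₊ⁿ` for the truncated power. Since `B_{n+2}(x)` is the
integral of `B_{n+1}` over `[x - 1, x]` and `(n + 1) ∫_{x-1}^x y₊ⁿ dy = ∇x₊ⁿ⁺¹`, induction gives
`n! B_{n+1} = ∇ⁿ⁺¹ x₊ⁿ`. The Leibniz rule for `∇`, applied to `x₊ᵈ⁺¹ = x · x₊ᵈ`, shows that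
`E_d = ∇ᵈ⁺¹ x₊ᵈ` satisfies `E_{d+1}(x) = x E_d(x) + (d + 2 - x) E_d(x - 1)`.

Inserting a new largest letter into the word of a permutation with `c` descents creates a new
descent unless it goes at the end or right after a descent: `c + 1` of the `d + 1` slots keep `c`
descents and the other `d - c` give `c + 1`. Hence the Eulerian numbers satisfy the same
recurrence `A_{d+1,k} = k A_{d,k} + (d + 2 - k) A_{d,k-1}`, and both sides agree for `d = 1`.
-/

open MeasureTheory Real Filter Finset

/-- The cardinal B-spline of order `d`: `B_1` is the indicator of `[0,1)`,
and `B_d = B_1 * B_{d-1}` (convolution) for `d ≥ 2`. -/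
noncomputable def Bspline : ℕ → ℝ → ℝ
  | 0, _ => 0
  | 1, x => if 0 ≤ x ∧ x < 1 then 1 else 0
  | (d + 2), x => ∫ y : ℝ, (if 0 ≤ x - y ∧ x - y < 1 then (1 : ℝ) else 0) * Bspline (d + 1) y

/-- Number of descents of a permutation `σ` of `{0, …, d-1}`: the number of
indices `i` with `i + 1 < d` and `σ (i+1) < σ i`. -/
def numDescents {d : ℕ} (σ : Equiv.Perm (Fin d)) : ℕ :=
  (Finset.univ.filter fun i : Fin d =>
    (i : ℕ) + 1 < d ∧ σ ⟨((i : ℕ) + 1) % d, Nat.mod_lt _ i.pos⟩ < σ i).card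

/-- Eulerian number `A_{d,k}`: the number of permutations of `{1, …, d}` with exactly
`k - 1` descents; `A_{d,k} = 0` for `k ≤ 0`. -/
def eulerianNumber (d : ℕ) (k : ℤ) : ℕ :=
  if k ≤ 0 then 0
  else (Finset.univ.filter fun σ : Equiv.Perm (Fin d) => (numDescents σ : ℤ) = k - 1).card

section BackwardDifference

variable {R : Type*} [CommRing R]

def bwdDiff (f : R → R) (x : R) : R := f x - f (x - 1)

lemma bwdDiff_iter_succ_apply (f : R → R) (m : ℕ) (x : R) :
    bwdDiff^[m + 1] f x = bwdDiff^[m] f x - bwdDiff^[m] f (x - 1) := by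
  rw [Function.iterate_succ_apply', bwdDiff]

lemma bwdDiff_iter_const_mul (c : R) (f : R → R) (m : ℕ) (x : R) :
    bwdDiff^[m] (fun y => c * f y) x = c * bwdDiff^[m] f x := by
  induction m generalizing x with
  | zero => rfl
  | succ m ih => rw [bwdDiff_iter_succ_apply, ih, ih, bwdDiff_iter_succ_apply, mul_sub]

lemma bwdDiff_iter_succ_id_mul (f : R → R) (m : ℕ) (x : R) :
    bwdDiff^[m + 1] (fun y => y * f y) x
      = x * bwdDiff^[m + 1] f x + (m + 1) * bwdDiff^[m] f (x - 1) := by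
  induction m generalizing x with
  | zero => simp only [bwdDiff_iter_succ_apply, Function.iterate_zero_apply]; push_cast; ring
  | succ m ih =>
    rw [bwdDiff_iter_succ_apply, ih, ih, bwdDiff_iter_succ_apply _ (m + 1),
      bwdDiff_iter_succ_apply _ m (x - 1)]
    push_cast
    ring

end BackwardDifference

lemma intervalIntegrable_bwdDiff {f : ℝ → ℝ} (hf : ∀ a b, IntervalIntegrable f volume a b)
    (a b : ℝ) : IntervalIntegrable (bwdDiff f) volume a b :=
  (hf a b).sub (by simpa using (hf (a - 1) (b - 1)).comp_sub_right 1)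

lemma integral_bwdDiff {f : ℝ → ℝ} (hf : ∀ a b, IntervalIntegrable f volume a b) (x : ℝ) :
    ∫ y in (x - 1)..x, bwdDiff f y = bwdDiff (fun z => ∫ y in (z - 1)..z, f y) x := by
  have hshift : ∫ y in (x - 1)..x, f (y - 1) = ∫ y in (x - 1 - 1)..(x - 1), f y :=
    intervalIntegral.integral_comp_sub_right f 1
  rw [bwdDiff, ← hshift, ← intervalIntegral.integral_sub (hf _ _)
    (by simpa using (hf (x - 1 - 1) (x - 1)).comp_sub_right 1)]
  rfl

lemma integral_bwdDiff_iter {f : ℝ → ℝ} (hf : ∀ a b, IntervalIntegrable f volume a b) (m : ℕ)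
    (x : ℝ) :
    ∫ y in (x - 1)..x, bwdDiff^[m] f y = bwdDiff^[m] (fun z => ∫ y in (z - 1)..z, f y) x := by
  induction m generalizing f with
  | zero => rfl
  | succ m ih =>
    simp only [Function.iterate_succ_apply]
    rw [ih (intervalIntegrable_bwdDiff hf)]
    simp_rw [integral_bwdDiff hf]

noncomputable def truncPow (n : ℕ) (x : ℝ) : ℝ := if 0 ≤ x then x ^ n else 0

lemma truncPow_succ (n : ℕ) (x : ℝ) : truncPow (n + 1) x = x * truncPow n x := by
  unfold truncPow
  split_ifs <;> ring

lemma monotone_truncPow (n : ℕ) : Monotone (truncPow n) := by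
  intro a b hab
  unfold truncPow
  split_ifs with ha hb hb
  · exact pow_le_pow_left₀ ha hab n
  · exact absurd (ha.trans hab) hb
  · exact pow_nonneg hb n
  · rfl

lemma continuous_truncPow_succ (n : ℕ) : Continuous (truncPow (n + 1)) :=
  Continuous.if_le (continuous_pow _) continuous_const continuous_const continuous_id
    fun x hx => by simp [← hx]

lemma hasDerivWithinAt_truncPow_succ (n : ℕ) (x : ℝ) :
    HasDerivWithinAt (truncPow (n + 1)) ((n + 1) * truncPow n x) (Set.Ici x) x := by
  by_cases hx : 0 ≤ x
  · have hpow := (hasDerivAt_pow (n + 1) x).hasDerivWithinAt (s := Set.Ici x)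
    rw [truncPow, if_pos hx]
    push_cast at hpow
    exact hpow.congr (fun y hy => if_pos (hx.trans hy)) (if_pos hx)
  · have hzero : truncPow (n + 1) =ᶠ[nhds x] fun _ => 0 :=
      (eventually_lt_nhds (not_le.mp hx)).mono fun y hy => if_neg (not_le.mpr hy)
    rw [truncPow, if_neg hx, mul_zero]
    exact ((hasDerivAt_const x (0 : ℝ)).congr_of_eventuallyEq hzero).hasDerivWithinAt

lemma integral_truncPow (n : ℕ) (a b : ℝ) :
    (n + 1) * ∫ y in a..b, truncPow n y = truncPow (n + 1) b - truncPow (n + 1) a := by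
  rw [← intervalIntegral.integral_const_mul]
  exact intervalIntegral.integral_eq_sub_of_hasDeriv_right
    (continuous_truncPow_succ n).continuousOn
    (fun x _ => (hasDerivWithinAt_truncPow_succ n x).mono Set.Ioi_subset_Ici_self)
    ((monotone_truncPow n).intervalIntegrable.const_mul _)

lemma Bspline_add_two (n : ℕ) (x : ℝ) :
    Bspline (n + 2) x = ∫ y in (x - 1)..x, Bspline (n + 1) y := by
  rw [Bspline, intervalIntegral.integral_of_le (by linarith),
    ← integral_indicator measurableSet_Ioc]
  congr 1 with y
  simp only [Set.indicator_apply, Set.mem_Ioc, ite_mul, one_mul, zero_mul]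
  congr 1
  apply propext
  constructor <;> rintro ⟨h₁, h₂⟩ <;> constructor <;> linarith

lemma factorial_mul_Bspline (n : ℕ) (x : ℝ) :
    (n.factorial : ℝ) * Bspline (n + 1) x = bwdDiff^[n + 1] (truncPow n) x := by
  induction n generalizing x with
  | zero =>
    simp only [Bspline, bwdDiff_iter_succ_apply, Function.iterate_zero_apply, truncPow, pow_zero,
      Nat.factorial_zero, Nat.cast_one, one_mul, sub_nonneg]
    by_cases h₁ : 1 ≤ x
    · simp [h₁, zero_le_one.trans h₁]
    · by_cases h₀ : 0 ≤ x <;> simp [h₀, h₁, lt_of_not_ge h₁]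
  | succ n ih =>
    have hint : ∀ a b, IntervalIntegrable (truncPow n) volume a b :=
      fun _ _ => (monotone_truncPow n).intervalIntegrable
    calc ((n + 1).factorial : ℝ) * Bspline (n + 2) x
        = (n + 1) * ∫ y in (x - 1)..x, n.factorial * Bspline (n + 1) y := by
          rw [Bspline_add_two, intervalIntegral.integral_const_mul, Nat.factorial_succ]
          push_cast
          ring
      _ = bwdDiff^[n + 1] (fun z => (n + 1) * ∫ y in (z - 1)..z, truncPow n y) x := by
          simp_rw [ih, integral_bwdDiff_iter hint, bwdDiff_iter_const_mul]
      _ = bwdDiff^[n + 2] (truncPow (n + 1)) x := by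
          simp_rw [integral_truncPow]
          rw [Function.iterate_succ_apply]
          rfl

lemma bwdDiff_iter_truncPow_succ (d : ℕ) (x : ℝ) :
    bwdDiff^[d + 2] (truncPow (d + 1)) x
      = x * bwdDiff^[d + 1] (truncPow d) x
        + (d + 2 - x) * bwdDiff^[d + 1] (truncPow d) (x - 1) := by
  have hmul : truncPow (d + 1) = fun y => y * truncPow d y := funext (truncPow_succ d)
  rw [hmul, bwdDiff_iter_succ_id_mul, bwdDiff_iter_succ_apply _ (d + 1)]
  push_cast
  ring

lemma bwdDiff_iter_two_truncPow_one (k : ℤ) :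
    bwdDiff^[2] (truncPow 1) k = if k = 1 then 1 else 0 := by
  simp only [bwdDiff_iter_succ_apply, Function.iterate_zero_apply, truncPow, pow_one]
  rcases lt_trichotomy k 1 with hk | rfl | hk
  · have : (k : ℝ) ≤ 0 := by exact_mod_cast Int.lt_add_one_iff.mp hk
    rw [if_neg hk.ne]
    split_ifs <;> linarith
  · norm_num
  · have : (2 : ℝ) ≤ k := by exact_mod_cast hk
    rw [if_neg hk.ne']
    split_ifs <;> linarith

section Words

variable {α : Type*}

def insertAt (p : ℕ) (a : α) (w : ℕ → α) (v : ℕ) : α :=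
  if v < p then w v else if v = p then a else w (v - 1)

variable {p n : ℕ} {a : α} {w : ℕ → α}

lemma insertAt_of_lt {v : ℕ} (hv : v < p) : insertAt p a w v = w v := if_pos hv

lemma insertAt_self : insertAt p a w p = a := by simp [insertAt]

lemma insertAt_of_gt {v : ℕ} (hv : p < v) : insertAt p a w v = w (v - 1) := by
  simp [insertAt, hv.not_gt, hv.ne']

variable [LinearOrder α]

-- Recording a descent `w (j - 1) > w j` by its end `j` makes `insert n (descentEnds n w)` the
-- set of slots where inserting a new largest letter creates no new descent.
def descentEnds (n : ℕ) (w : ℕ → α) : Finset ℕ :=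
  (range n).filter fun j => 0 < j ∧ w j < w (j - 1)

lemma descentEnds_insertAt (hp : p ≤ n) (ha : ∀ v < n, w v < a) :
    descentEnds (n + 1) (insertAt p a w)
      = (descentEnds n w).image (fun j => if j < p then j else j + 1)
        ∪ if p < n then {p + 1} else ∅ := by
  ext j
  simp only [descentEnds, mem_union, mem_image, mem_filter, mem_range]
  constructor
  · rintro ⟨hj, hj₀, hlt⟩
    rcases lt_trichotomy j p with hjp | rfl | hjp
    · rw [insertAt_of_lt hjp, insertAt_of_lt (by omega)] at hlt
      exact Or.inl ⟨j, ⟨by omega, hj₀, hlt⟩, if_pos hjp⟩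
    · rw [insertAt_self, insertAt_of_lt (by omega)] at hlt
      exact absurd (ha _ (by omega)) hlt.not_gt
    · rcases (Nat.succ_le_of_lt hjp).eq_or_lt with rfl | hjp'
      · exact Or.inr (by rw [if_pos (by omega)]; exact mem_singleton_self _)
      · rw [insertAt_of_gt hjp, insertAt_of_gt (by omega)] at hlt
        exact Or.inl ⟨j - 1, ⟨by omega, by omega, hlt⟩, by rw [if_neg (by omega)]; omega⟩
  · rintro (⟨i, ⟨hi, hi₀, hlt⟩, rfl⟩ | hj)
    · by_cases hip : i < p
      · rw [if_pos hip, insertAt_of_lt hip, insertAt_of_lt (by omega)]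
        exact ⟨by omega, hi₀, hlt⟩
      rw [if_neg hip]
      rcases (not_lt.mp hip).eq_or_lt with rfl | hpi
      · rw [insertAt_of_gt (by omega), Nat.add_sub_cancel, insertAt_self]
        exact ⟨by omega, by omega, ha _ hi⟩
      · rw [insertAt_of_gt (by omega), insertAt_of_gt (by omega), Nat.add_sub_cancel]
        exact ⟨by omega, by omega, hlt⟩
    · split_ifs at hj with hpn
      · rw [mem_singleton] at hj
        subst hj
        rw [insertAt_of_gt (by omega), Nat.add_sub_cancel, insertAt_self]
        exact ⟨by omega, by omega, ha p hpn⟩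
      · exact absurd hj (notMem_empty _)

lemma card_descentEnds_insertAt (hp : p ≤ n) (ha : ∀ v < n, w v < a) :
    #(descentEnds (n + 1) (insertAt p a w))
      = #(descentEnds n w) + if p ∈ insert n (descentEnds n w) then 0 else 1 := by
  have hs : StrictMono fun j => if j < p then j else j + 1 := fun i j hij => by
    dsimp only
    split_ifs <;> omega
  rw [descentEnds_insertAt hp ha]
  by_cases hpn : p < n
  · have hp_image : p + 1 ∈ (descentEnds n w).image (fun j => if j < p then j else j + 1)
        ↔ p ∈ descentEnds n w := by
      simpa using hs.injective.mem_finset_image (a := p) (s := descentEnds n w)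
    rw [if_pos hpn, union_singleton, card_insert_eq_ite, card_image_of_injective _ hs.injective]
    simp only [hp_image, mem_insert, hpn.ne, false_or]
    split_ifs <;> rfl
  · rw [if_neg hpn, union_empty, card_image_of_injective _ hs.injective,
      if_pos (mem_insert.mpr (Or.inl (by omega))), add_zero]

end Words

section InsertMax

variable {d : ℕ}

def permWord (σ : Equiv.Perm (Fin d)) (v : ℕ) : ℕ := if h : v < d then σ ⟨v, h⟩ else 0

lemma permWord_lt (σ : Equiv.Perm (Fin d)) {v : ℕ} (hv : v < d) : permWord σ v < d := by
  simp [permWord, hv]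

lemma numDescents_eq_card_descentEnds (σ : Equiv.Perm (Fin d)) :
    numDescents σ = #(descentEnds d (permWord σ)) := by
  rw [numDescents, ← card_image_of_injective _ (add_left_injective 1 |>.comp Fin.val_injective)]
  congr 1
  ext j
  simp only [descentEnds, mem_image, mem_filter, mem_univ, true_and, mem_range,
    Function.comp_apply]
  simp only [permWord]
  constructor
  · rintro ⟨i, ⟨hi, hlt⟩, rfl⟩
    simp only [Nat.mod_eq_of_lt hi] at hlt
    simpa [hi, i.isLt] using hlt
  · rintro ⟨hj, hj₀, hlt⟩
    refine ⟨⟨j - 1, by omega⟩, ⟨by dsimp only; omega, ?_⟩, by dsimp only; omega⟩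
    simp only [show j - 1 + 1 = j by omega, Nat.mod_eq_of_lt hj]
    simpa [hj, show j - 1 < d by omega] using hlt

-- The word of `σ` with the new largest letter `d` inserted at position `p`.
def insertMax (σ : Equiv.Perm (Fin d)) (p : Fin (d + 1)) : Equiv.Perm (Fin (d + 1)) :=
  (finSuccEquiv' p).trans ((Equiv.optionCongr σ).trans finSuccEquivLast.symm)

variable (σ : Equiv.Perm (Fin d)) (p : Fin (d + 1))

lemma insertMax_apply_self : insertMax σ p p = Fin.last d := by
  simp [insertMax]

lemma insertMax_apply_succAbove (j : Fin d) :
    insertMax σ p (p.succAbove j) = (σ j).castSucc := by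
  simp [insertMax]

lemma permWord_insertMax : permWord (insertMax σ p) = insertAt p d (permWord σ) := by
  funext v
  rcases lt_trichotomy v p with hv | rfl | hv
  · have : (⟨v, by omega⟩ : Fin (d + 1)) = p.succAbove ⟨v, by omega⟩ :=
      (Fin.succAbove_of_castSucc_lt p ⟨v, by omega⟩ (Fin.lt_def.mpr hv)).symm
    rw [insertAt_of_lt hv, permWord, dif_pos (by omega), this, insertMax_apply_succAbove,
      permWord, dif_pos (by omega), Fin.val_castSucc]
  · rw [insertAt_self, permWord, dif_pos p.isLt, Fin.eta, insertMax_apply_self, Fin.val_last]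
  · rw [insertAt_of_gt hv]
    by_cases hvd : v < d + 1
    · have : (⟨v, hvd⟩ : Fin (d + 1)) = p.succAbove ⟨v - 1, by omega⟩ := by
        rw [Fin.succAbove_of_le_castSucc _ _ (Fin.le_def.mpr (show (p : ℕ) ≤ v - 1 by omega)),
          Fin.succ_mk, Fin.mk.injEq]
        omega
      rw [permWord, dif_pos hvd, this, insertMax_apply_succAbove, permWord, dif_pos (by omega),
        Fin.val_castSucc]
    · rw [permWord, permWord, dif_neg hvd, dif_neg (by omega)]

lemma numDescents_insertMax :
    numDescents (insertMax σ p)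
      = numDescents σ + if (p : ℕ) ∈ insert d (descentEnds d (permWord σ)) then 0 else 1 := by
  rw [numDescents_eq_card_descentEnds, numDescents_eq_card_descentEnds, permWord_insertMax]
  exact card_descentEnds_insertAt p.is_le fun v hv => permWord_lt σ hv

variable (d) in
lemma bijective_insertMax :
    Function.Bijective fun q : Equiv.Perm (Fin d) × Fin (d + 1) => insertMax q.1 q.2 := by
  refine (Fintype.bijective_iff_injective_and_card _).mpr ⟨?_, ?_⟩
  · rintro ⟨σ, p⟩ ⟨σ', p'⟩ h
    dsimp only at h
    obtain rfl : p = p' := (insertMax σ' p').injective <| by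
      rw [insertMax_apply_self, ← h, insertMax_apply_self]
    obtain rfl : σ = σ' := Equiv.ext fun j => Fin.castSucc_injective _ <| by
      rw [← insertMax_apply_succAbove, h, insertMax_apply_succAbove]
    rfl
  · simp [Fintype.card_perm, Nat.factorial_succ, mul_comm]

end InsertMax

lemma eulerianNumber_eq_sum (d : ℕ) (k : ℤ) :
    (eulerianNumber d k : ℤ)
      = ∑ σ : Equiv.Perm (Fin d), if (numDescents σ : ℤ) + 1 = k then 1 else 0 := by
  rw [eulerianNumber]
  split_ifs with hk
  · refine (sum_eq_zero fun σ _ => if_neg ?_).symm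
    omega
  · rw [card_filter]
    push_cast
    simp_rw [eq_sub_iff_add_eq]

lemma eulerianNumber_one (k : ℤ) : (eulerianNumber 1 k : ℤ) = if k = 1 then 1 else 0 := by
  simp [eulerianNumber_eq_sum, numDescents, eq_comm]

lemma sum_ite_numDescents_insertMax {d : ℕ} (σ : Equiv.Perm (Fin d)) (k : ℤ) :
    ∑ p : Fin (d + 1), (if (numDescents (insertMax σ p) : ℤ) + 1 = k then 1 else 0)
      = k * (if (numDescents σ : ℤ) + 1 = k then 1 else 0)
        + (d + 2 - k) * (if (numDescents σ : ℤ) + 1 = k - 1 then 1 else 0) := by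
  set G := insert d (descentEnds d (permWord σ))
  have hG : G ⊆ range (d + 1) := insert_subset (self_mem_range_succ d)
    ((filter_subset _ _).trans (range_subset_range.mpr d.le_succ))
  have hcard : #G = numDescents σ + 1 := by
    rw [card_insert_of_notMem (by simp [descentEnds]), numDescents_eq_card_descentEnds]
  have hcompl := card_filter_add_card_filter_not (s := range (d + 1)) (· ∈ G)
  rw [filter_mem_eq_inter, inter_eq_right.mpr hG, card_range] at hcompl
  have hterm : ∀ p : Fin (d + 1),
      (if (numDescents (insertMax σ p) : ℤ) + 1 = k then 1 else 0 : ℤ)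
        = if (p : ℕ) ∈ G then (if (numDescents σ : ℤ) + 1 = k then 1 else 0)
          else (if (numDescents σ : ℤ) + 1 = k - 1 then 1 else 0) := by
    intro p
    rw [numDescents_insertMax]
    split_ifs <;> push_cast at * <;> omega
  rw [sum_congr rfl fun p _ => hterm p,
    Fin.sum_univ_eq_sum_range (fun p => if p ∈ G then _ else _), sum_ite, sum_const, sum_const,
    filter_mem_eq_inter, inter_eq_right.mpr hG, hcard]
  simp only [nsmul_eq_mul]
  split_ifs <;> push_cast <;> omega

lemma eulerianNumber_succ (d : ℕ) (k : ℤ) :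
    (eulerianNumber (d + 1) k : ℤ)
      = k * eulerianNumber d k + (d + 2 - k) * eulerianNumber d (k - 1) := by
  rw [eulerianNumber_eq_sum, ← (bijective_insertMax d).sum_comp, Fintype.sum_prod_type]
  simp only [sum_ite_numDescents_insertMax, sum_add_distrib, ← mul_sum, ← eulerianNumber_eq_sum]

lemma eulerianNumber_eq_bwdDiff_iter_truncPow {d : ℕ} (hd : 1 ≤ d) (k : ℤ) :
    (eulerianNumber d k : ℝ) = bwdDiff^[d + 1] (truncPow d) k := by
  induction d, hd using Nat.le_induction generalizing k with
  | base =>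
    rw [bwdDiff_iter_two_truncPow_one]
    exact_mod_cast eulerianNumber_one k
  | succ d _ ih =>
    have hcast : (k : ℝ) - 1 = ((k - 1 : ℤ) : ℝ) := by push_cast; ring
    rw [bwdDiff_iter_truncPow_succ, hcast, ← ih, ← ih]
    exact_mod_cast eulerianNumber_succ d k

theorem eulerian_eq_bspline_general (d k : ℕ) (hd : 1 ≤ d) :
    (eulerianNumber d (k : ℤ) : ℝ) = (d.factorial : ℝ) * Bspline (d + 1) (k : ℝ) := by
  rw [factorial_mul_Bspline]
  exact_mod_cast eulerianNumber_eq_bwdDiff_iter_truncPow hd k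

theorem eulerian_eq_bspline (d k : ℕ) (hd : 1 ≤ d) (hk : 1 ≤ k) :
    (eulerianNumber d (k : ℤ) : ℝ) = (d.factorial : ℝ) * Bspline (d + 1) (k : ℝ) :=
  eulerian_eq_bspline_general d k hd
end

section
/- For every real y with 0 ≤ y ≤ 1, sinc(πy) ≤ 1 − y², i.e. for 0 < y ≤ 1 one has sin(πy)/(πy) ≤ 1 − y², and at y = 0 both sides equal 1. -/
open MeasureTheory Real Filter Finset

/-! Every factor of Euler's product `sin (π x) = π x ∏_{j ≥ 1} (1 - x² / j²)` lies in `[0, 1]`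
when `|x| ≤ 1`, so the product is at most its first factor `1 - x²` and `sin (π x) ≤ π x (1 - x²)` for `0 ≤ x ≤ 1`. -/

/-- `sinc t = sin t / t` for `t ≠ 0`, and `sinc 0 = 1`. -/
noncomputable def sinc (t : ℝ) : ℝ := if t = 0 then 1 else Real.sin t / t

lemma prod_range_one_sub_sq_div_le {x : ℝ} (hx : x ^ 2 ≤ 1) {n : ℕ} (hn : 1 ≤ n) :
    ∏ j ∈ range n, (1 - x ^ 2 / ((j : ℝ) + 1) ^ 2) ≤ 1 - x ^ 2 := by
  obtain ⟨m, rfl⟩ := Nat.exists_eq_add_of_le' hn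
  have hfactor (j : ℕ) : x ^ 2 / ((j : ℝ) + 1 + 1) ^ 2 ∈ Set.Icc 0 1 := by
    refine ⟨by positivity, div_le_one_of_le₀ (hx.trans ?_) (by positivity)⟩
    nlinarith [(j.cast_nonneg : (0 : ℝ) ≤ j)]
  have htail : ∏ j ∈ range m, (1 - x ^ 2 / ((j : ℝ) + 1 + 1) ^ 2) ≤ 1 :=
    prod_le_one (fun j _ => sub_nonneg.2 (hfactor j).2) fun j _ => by linarith [(hfactor j).1]
  rw [prod_range_succ', Nat.cast_zero, zero_add, one_pow, div_one]
  simp only [Nat.cast_add, Nat.cast_one]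
  exact mul_le_of_le_one_left (sub_nonneg.2 hx) htail

lemma sin_pi_mul_le {x : ℝ} (h0 : 0 ≤ x) (h1 : x ≤ 1) :
    Real.sin (π * x) ≤ π * x * (1 - x ^ 2) := by
  have hx : x ^ 2 ≤ 1 := pow_le_one₀ h0 h1
  refine le_of_tendsto (tendsto_euler_sin_prod x) (eventually_atTop.2 ⟨1, fun n hn => ?_⟩)
  exact mul_le_mul_of_nonneg_left (prod_range_one_sub_sq_div_le hx hn) (by positivity)

theorem sinc_le_parabola (y : ℝ) (h0 : 0 ≤ y) (h1 : y ≤ 1) :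
    _root_.sinc (π * y) ≤ 1 - y ^ 2 := by
  rcases h0.eq_or_lt with rfl | hy
  · simp [_root_.sinc]
  have hπy : 0 < π * y := mul_pos pi_pos hy
  rw [_root_.sinc, if_neg hπy.ne', div_le_iff₀ hπy, mul_comm (1 - y ^ 2)]
  exact sin_pi_mul_le h0 h1
end

section
/- For every natural number k there exists a constant c > 0 such that the function G : ℝ → ℝ defined by G(x) = 𝟙_{|x|>1}(x) · c/(π² x²) + π^k · |x|^k · exp(−x²) satisfies: (a) G ∈ L^p(ℝ) for every p ∈ [1,∞), i.e. ∫_ℝ |G(x)|^p dx < ∞; and (b) for every integer d ≥ k + 2 and every real x, π^k · |x|^k · |sinc(πx/√d)|^d ≤ G(x). -/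
/-!
Put `u = π x / √d`. While `|u| ≤ 3π/4`, the identity `sinc u = sinc (u/2) cos (u/2)` and the
quartic Taylor bound for `cos` give `|sinc u| ≤ exp (-u² / π²)`, whose `d`-th power is exactly
`exp (-x²)`. Beyond that, `|sinc u| ≤ 1/|u|` spent on `k + 2` of the `d` factors produces the
decay `√d ^ (k + 2) / (π² x²)`, and each remaining factor is at most `(3π/4)⁻¹ < 1`; since
`√d ^ (k + 2) = o((3π/4) ^ d)` this is bounded uniformly in `d`. Finally `G` is dominated by a
multiple of `(1 + x²)⁻¹`, which lies in every `Lᵖ`, `p ≥ 1`.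
-/

open MeasureTheory Real Filter Finset

/-- The dominating function `G` of Lemma 4.1. -/
noncomputable def Gfun (k : ℕ) (c : ℝ) (x : ℝ) : ℝ :=
  Set.indicator {y : ℝ | 1 < |y|} (fun y => c / (π ^ 2 * y ^ 2)) x +
    π ^ k * |x| ^ k * Real.exp (-x ^ 2)

open scoped Nat

theorem sinc_eq_real_sinc : _root_.sinc = Real.sinc := rfl

namespace Real

theorem cos_le_one_sub_sq_div_two_add_pow_four_div (x : ℝ) :
    cos x ≤ 1 - x ^ 2 / 2 + x ^ 4 / 24 := by
  wlog hx : 0 ≤ x generalizing x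
  · simpa [Even.neg_pow (by decide : Even 2), Even.neg_pow (by decide : Even 4)] using
      this (-x) (by linarith)
  rcases le_or_gt (x ^ 2) 12 with hx12 | hx12
  · have hsin := sin_ge_sub_cube (by positivity : 0 ≤ x / 2)
    have hcos : cos x = 1 - 2 * sin (x / 2) ^ 2 := by
      rw [← cos_two_mul_eq_one_sub, mul_div_cancel₀ x two_ne_zero]
    have hpos : 0 ≤ x / 2 - (x / 2) ^ 3 / 6 := by nlinarith
    nlinarith [pow_le_pow_left₀ hpos hsin 2, pow_nonneg hx 6]
  · nlinarith [cos_le_one x]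

theorem abs_sinc_le_abs_cos_half (t : ℝ) : |Real.sinc t| ≤ |cos (t / 2)| := by
  rcases eq_or_ne t 0 with rfl | ht
  · simp
  have : Real.sinc t = Real.sinc (t / 2) * cos (t / 2) := by
    rw [sinc_of_ne_zero ht, sinc_of_ne_zero (by positivity)]
    nth_rw 1 [← mul_div_cancel₀ t two_ne_zero, sin_two_mul]
    field_simp
  rw [this, abs_mul]
  exact mul_le_of_le_one_left (abs_nonneg _) (abs_sinc_le_one _)

theorem abs_sinc_le_exp_neg_sq {t : ℝ} (ht : |t| ≤ 3 / 4 * π) :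
    |Real.sinc t| ≤ exp (-(t ^ 2 / π ^ 2)) := by
  have hcos : 0 ≤ cos (t / 2) := cos_nonneg_of_mem_Icc <| by
    constructor <;> linarith [abs_le.1 ht, pi_pos]
  have ht2 : t ^ 2 ≤ (3 / 4 * π) ^ 2 := sq_le_sq' (abs_le.1 ht).1 (abs_le.1 ht).2
  have hquartic : 1 - (t / 2) ^ 2 / 2 + (t / 2) ^ 4 / 24 ≤ 1 - t ^ 2 / π ^ 2 := by
    rw [← sub_nonneg]
    have : 1 - t ^ 2 / π ^ 2 - (1 - (t / 2) ^ 2 / 2 + (t / 2) ^ 4 / 24) =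
        t ^ 2 * (π ^ 2 / 8 - 1 - π ^ 2 * t ^ 2 / 384) / π ^ 2 := by
      field_simp; ring
    rw [this]
    have hlo : 3.14 ^ 2 < π ^ 2 := by gcongr; exact pi_gt_d2
    have hhi : π ^ 2 < 3.15 ^ 2 := by gcongr; exact pi_lt_d2
    have : 0 ≤ π ^ 2 / 8 - 1 - π ^ 2 * t ^ 2 / 384 := by
      nlinarith [mul_le_mul_of_nonneg_left ht2 (sq_nonneg π)]
    positivity
  calc |Real.sinc t| ≤ |cos (t / 2)| := abs_sinc_le_abs_cos_half t
    _ = cos (t / 2) := abs_of_nonneg hcos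
    _ ≤ 1 - (t / 2) ^ 2 / 2 + (t / 2) ^ 4 / 24 := cos_le_one_sub_sq_div_two_add_pow_four_div _
    _ ≤ 1 - t ^ 2 / π ^ 2 := hquartic
    _ ≤ exp (-(t ^ 2 / π ^ 2)) := by linarith [add_one_le_exp (-(t ^ 2 / π ^ 2))]

theorem abs_sinc_pow_le_exp_neg_sq {d : ℕ} {x : ℝ} (hx : |x| ≤ 3 / 4 * √d) :
    |Real.sinc (π * x / √d)| ^ d ≤ exp (-x ^ 2) := by
  rcases Nat.eq_zero_or_pos d with rfl | hd
  · simp_all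
  have hD : 0 < √d := sqrt_pos.2 (by exact_mod_cast hd)
  have ht : |π * x / √d| ≤ 3 / 4 * π := by
    rw [abs_div, abs_mul, abs_of_pos pi_pos, abs_of_pos hD, div_le_iff₀ hD]
    nlinarith [pi_pos]
  calc |Real.sinc (π * x / √d)| ^ d ≤ exp (-((π * x / √d) ^ 2 / π ^ 2)) ^ d := by
        gcongr; exact abs_sinc_le_exp_neg_sq ht
    _ = exp (-x ^ 2) := by
        rw [← exp_nat_mul, div_pow, mul_pow, sq_sqrt (Nat.cast_nonneg d)]
        field_simp

theorem abs_sinc_pow_mul_le {r t : ℝ} {j d : ℕ} (hr : 0 < r) (hrt : r ≤ |t|) (hjd : j ≤ d) :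
    |Real.sinc t| ^ d * (r ^ d * |t| ^ j) ≤ r ^ j := by
  obtain ⟨m, rfl⟩ := Nat.exists_eq_add_of_le hjd
  have ht : 0 < |t| := hr.trans_le hrt
  have hsinc_t : |Real.sinc t| * |t| ≤ 1 := by
    rw [sinc_of_ne_zero (abs_pos.1 ht), abs_div, div_mul_cancel₀ _ ht.ne']
    exact abs_sin_le_one t
  have hsinc_r : |Real.sinc t| * r ≤ 1 :=
    (mul_le_mul_of_nonneg_left hrt (abs_nonneg _)).trans hsinc_t
  calc |Real.sinc t| ^ (j + m) * (r ^ (j + m) * |t| ^ j)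
      = (|Real.sinc t| * |t|) ^ j * (|Real.sinc t| * r) ^ m * r ^ j := by ring
    _ ≤ 1 ^ j * 1 ^ m * r ^ j := by gcongr
    _ = r ^ j := by ring

end Real

theorem exists_sqrt_pow_le_mul_pow {r : ℝ} (hr : 1 < r) (j : ℕ) :
    ∃ C, 0 < C ∧ ∀ n : ℕ, √n ^ j ≤ C * r ^ n := by
  obtain ⟨C, hC⟩ := (tendsto_pow_const_div_const_pow_of_one_lt j hr).bddAbove_range
  refine ⟨max C 1, by positivity, fun n => ?_⟩
  have hn : (n : ℝ) ^ j / r ^ n ≤ C := hC ⟨n, rfl⟩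
  rw [div_le_iff₀ (by positivity)] at hn
  calc √n ^ j ≤ (n : ℝ) ^ j := by
        gcongr
        rcases n with _ | n
        · simp
        · exact sqrt_le_self_iff.2 (Or.inr (by simp))
    _ ≤ C * r ^ n := hn
    _ ≤ max C 1 * r ^ n := by gcongr; exact le_max_left _ _

theorem lintegral_ofReal_abs_rpow_lt_top {f : ℝ → ℝ} {B : ℝ}
    (hf : ∀ x, |f x| ≤ B * (1 + x ^ 2)⁻¹) {p : ℝ} (hp : 1 ≤ p) :
    ∫⁻ x, ENNReal.ofReal (|f x| ^ p) < ⊤ := by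
  have hB : 0 ≤ B := by simpa using (abs_nonneg _).trans (hf 0)
  have hbound : ∀ x : ℝ, |f x| ^ p ≤ B ^ p * (1 + x ^ 2)⁻¹ := fun x => by
    have h0 : 0 < (1 + x ^ 2)⁻¹ := by positivity
    have h1 : (1 + x ^ 2)⁻¹ ≤ 1 := inv_le_one_of_one_le₀ (by nlinarith)
    calc |f x| ^ p ≤ (B * (1 + x ^ 2)⁻¹) ^ p := by gcongr; exact hf x
      _ = B ^ p * ((1 + x ^ 2)⁻¹) ^ p := mul_rpow hB h0.le
      _ ≤ B ^ p * ((1 + x ^ 2)⁻¹) ^ (1 : ℝ) :=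
          mul_le_mul_of_nonneg_left (rpow_le_rpow_of_exponent_ge h0 h1 hp) (by positivity)
      _ = B ^ p * (1 + x ^ 2)⁻¹ := by rw [rpow_one]
  calc ∫⁻ x, ENNReal.ofReal (|f x| ^ p) ≤ ∫⁻ x, ENNReal.ofReal (B ^ p * (1 + x ^ 2)⁻¹) :=
        lintegral_mono fun x => ENNReal.ofReal_le_ofReal (hbound x)
    _ < ⊤ := (integrable_inv_one_add_sq.const_mul _).lintegral_lt_top

theorem pow_abs_mul_exp_neg_sq_le (k : ℕ) (x : ℝ) :
    |x| ^ k * exp (-x ^ 2) ≤ (k + 1)! * exp 1 * (1 + x ^ 2)⁻¹ := by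
  set y := 1 + x ^ 2 with hy
  have hy0 : 0 < y := by positivity
  have hxy : |x| ≤ y := by nlinarith [sq_abs x, sq_nonneg (|x| - 1)]
  have hexp : exp (-x ^ 2) = exp 1 * exp (-y) := by rw [← exp_add, hy]; ring_nf
  have hfact : y ^ (k + 1) * exp (-y) ≤ (k + 1)! := by
    have := pow_div_factorial_le_exp y hy0.le (k + 1)
    rw [div_le_iff₀ (by positivity)] at this
    rw [exp_neg, ← div_eq_mul_inv, div_le_iff₀ (exp_pos _)]
    linarith
  rw [hexp, le_mul_inv_iff₀ hy0]
  calc |x| ^ k * (exp 1 * exp (-y)) * y ≤ y ^ k * (exp 1 * exp (-y)) * y := by gcongr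
    _ = y ^ (k + 1) * exp (-y) * exp 1 := by ring
    _ ≤ (k + 1)! * exp 1 := by gcongr

theorem pi_pow_mul_abs_pow_mul_abs_sinc_pow_le {k d : ℕ} (hd : k + 2 ≤ d) {a C x : ℝ}
    (ha : 0 < a) (hC : √d ^ (k + 2) ≤ C * (a * π) ^ d) (hx : a * √d ≤ |x|) :
    π ^ k * |x| ^ k * |Real.sinc (π * x / √d)| ^ d ≤ C * (a * π) ^ (k + 2) / (π ^ 2 * x ^ 2) := by
  have hD : 0 < √d := sqrt_pos.2 (by exact_mod_cast (show 0 < d by omega))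
  have hX : 0 < |x| := (mul_pos ha hD).trans_le hx
  have ht : |π * x / √d| = π * |x| / √d := by
    rw [abs_div, abs_mul, abs_of_pos pi_pos, abs_of_pos hD]
  have hrt : a * π ≤ |π * x / √d| := by
    rw [ht, le_div_iff₀ hD]; nlinarith [pi_pos]
  have hsinc := abs_sinc_pow_mul_le (by positivity) hrt hd
  rw [← sq_abs x, le_div_iff₀ (mul_pos (pow_pos pi_pos 2) (pow_pos hX 2))]
  refine le_of_mul_le_mul_right ?_ (pow_pos (mul_pos ha pi_pos) d)
  calc π ^ k * |x| ^ k * |Real.sinc (π * x / √d)| ^ d * (π ^ 2 * |x| ^ 2) * (a * π) ^ d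
      = |Real.sinc (π * x / √d)| ^ d * ((a * π) ^ d * |π * x / √d| ^ (k + 2)) * √d ^ (k + 2) := by
        rw [ht, div_pow, mul_pow]; field_simp; ring
    _ ≤ (a * π) ^ (k + 2) * (C * (a * π) ^ d) := by gcongr
    _ = C * (a * π) ^ (k + 2) * (a * π) ^ d := by ring

theorem pi_pow_mul_abs_pow_mul_exp_le_Gfun (k : ℕ) {c : ℝ} (hc : 0 ≤ c) (x : ℝ) :
    π ^ k * |x| ^ k * exp (-x ^ 2) ≤ Gfun k c x :=
  le_add_of_nonneg_left (Set.indicator_nonneg (fun _ _ => by positivity) x)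

theorem div_le_Gfun (k : ℕ) {c x : ℝ} (hx : 1 < |x|) : c / (π ^ 2 * x ^ 2) ≤ Gfun k c x := by
  rw [Gfun, Set.indicator_of_mem (show x ∈ {y : ℝ | 1 < |y|} from hx)]
  exact le_add_of_nonneg_right (by positivity)

theorem abs_Gfun_le (k : ℕ) {c : ℝ} (hc : 0 ≤ c) (x : ℝ) :
    |Gfun k c x| ≤ (2 * c / π ^ 2 + π ^ k * ((k + 1)! * exp 1)) * (1 + x ^ 2)⁻¹ := by
  have hindicator : Set.indicator {y : ℝ | 1 < |y|} (fun y => c / (π ^ 2 * y ^ 2)) x ≤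
      2 * c / π ^ 2 * (1 + x ^ 2)⁻¹ := by
    by_cases hx : 1 < |x|
    · have hx2 : 1 < x ^ 2 := by nlinarith [sq_abs x]
      have h2 : 1 ≤ 2 * x ^ 2 * (1 + x ^ 2)⁻¹ := by
        rw [le_mul_inv_iff₀ (by positivity)]; linarith
      rw [Set.indicator_of_mem (show x ∈ {y : ℝ | 1 < |y|} from hx),
        div_le_iff₀ (by positivity)]
      calc c = c * 1 := (mul_one c).symm
        _ ≤ c * (2 * x ^ 2 * (1 + x ^ 2)⁻¹) := by gcongr
        _ = 2 * c / π ^ 2 * (1 + x ^ 2)⁻¹ * (π ^ 2 * x ^ 2) := by field_simp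
    · rw [Set.indicator_of_notMem (show x ∉ {y : ℝ | 1 < |y|} from hx)]
      positivity
  have hgauss := mul_le_mul_of_nonneg_left (pow_abs_mul_exp_neg_sq_le k x) (pow_nonneg pi_pos.le k)
  rw [abs_of_nonneg ((pi_pow_mul_abs_pow_mul_exp_le_Gfun k hc x).trans' (by positivity)), Gfun]
  linarith

theorem sinc_pow_dominated (k : ℕ) :
    ∃ c : ℝ, 0 < c ∧
      (∀ p : ℝ, 1 ≤ p → ∫⁻ x : ℝ, ENNReal.ofReal (|Gfun k c x| ^ p) < ⊤) ∧
      (∀ d : ℕ, k + 2 ≤ d → ∀ x : ℝ,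
        π ^ k * |x| ^ k * |_root_.sinc (π * x / Real.sqrt d)| ^ d ≤ Gfun k c x) := by
  obtain ⟨C, hC0, hC⟩ := exists_sqrt_pow_le_mul_pow (by linarith [pi_gt_three] : 1 < 3 / 4 * π)
    (k + 2)
  have hc : 0 < C * (3 / 4 * π) ^ (k + 2) := by positivity
  refine ⟨_, hc, fun p hp => lintegral_ofReal_abs_rpow_lt_top (abs_Gfun_le k hc.le) hp,
    fun d hd x => ?_⟩
  rw [sinc_eq_real_sinc]
  rcases le_or_gt |x| (3 / 4 * √d) with hx | hx
  · calc π ^ k * |x| ^ k * |Real.sinc (π * x / √d)| ^ d ≤ π ^ k * |x| ^ k * exp (-x ^ 2) := by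
          gcongr; exact abs_sinc_pow_le_exp_neg_sq hx
      _ ≤ Gfun k _ x := pi_pow_mul_abs_pow_mul_exp_le_Gfun k hc.le x
  · have h1 : 1 ≤ 3 / 4 * √d := by
      have hd2 : (2 : ℝ) ≤ d := by exact_mod_cast (by omega : 2 ≤ d)
      have : 4 / 3 ≤ √d := (le_sqrt (by norm_num) (by positivity)).2 (by linarith)
      linarith
    exact (pi_pow_mul_abs_pow_mul_abs_sinc_pow_le hd (by norm_num) (hC d) hx.le).trans
      (div_le_Gfun k (h1.trans_lt hx))
end

section
/- There exists a constant C > 0 such that for every integer d ≥ 1 and every real x with 0 ≤ x ≤ 1: |sinc((x/2)·√(12/d))^d − exp(−x²/2)| ≤ C/d. -/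
open MeasureTheory Real Filter Finset

/-!
With `t = (x / 2) √(12 / d)` we have `d t² / 6 = x² / 2`, so the Gaussian is `exp (-t² / 6) ^ d`.
Both `sinc t` and `exp (-t² / 6)` are `1 - t² / 6 + O(t⁴)` and lie in `[-1, 1]`, so
telescoping `aᵈ - bᵈ` costs only a factor `d`: the error is `O(d t⁴) = O(x⁴ / d)`.
-/

theorem abs_pow_sub_pow_le_of_abs_le_one {α : Type*} [CommRing α] [LinearOrder α]
    [IsOrderedRing α] {a b : α} (ha : |a| ≤ 1) (hb : |b| ≤ 1) (n : ℕ) :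
    |a ^ n - b ^ n| ≤ n * |a - b| := by
  calc |a ^ n - b ^ n| ≤ |a - b| * n * max |a| |b| ^ (n - 1) := abs_pow_sub_pow_le a b n
    _ ≤ |a - b| * n * 1 := by gcongr; exact pow_le_one₀ (by positivity) (max_le ha hb)
    _ = n * |a - b| := by ring

namespace Real

theorem nonneg_of_hasDerivAt_nonneg {f f' : ℝ → ℝ} (hf : ∀ x, HasDerivAt f (f' x) x)
    (hf' : ∀ x, 0 ≤ x → 0 ≤ f' x) (h0 : f 0 = 0) {t : ℝ} (ht : 0 ≤ t) : 0 ≤ f t := by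
  have hmono : MonotoneOn f (Set.Ici 0) := by
    refine monotoneOn_of_deriv_nonneg (convex_Ici 0)
      (fun x _ ↦ (hf x).continuousAt.continuousWithinAt)
      (fun x _ ↦ (hf x).differentiableAt.differentiableWithinAt) fun x hx ↦ ?_
    rw [(hf x).deriv]
    exact hf' x (interior_subset hx)
  simpa [h0] using hmono Set.self_mem_Ici ht ht

theorem cos_le_one_sub_sq_div_two_add_pow_four {t : ℝ} (ht : 0 ≤ t) :
    cos t ≤ 1 - t ^ 2 / 2 + t ^ 4 / 24 := by
  have key := nonneg_of_hasDerivAt_nonneg (f := fun x ↦ 1 - x ^ 2 / 2 + x ^ 4 / 24 - cos x)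
    (fun x ↦ ((((hasDerivAt_pow 2 x).div_const 2).const_sub 1).add
      ((hasDerivAt_pow 4 x).div_const 24)).sub (hasDerivAt_cos x))
    (fun x hx ↦ by nlinarith [sin_ge_sub_cube hx]) (by simp) ht
  linarith

theorem sin_le_sub_cube_add_pow_five {t : ℝ} (ht : 0 ≤ t) :
    sin t ≤ t - t ^ 3 / 6 + t ^ 5 / 120 := by
  have key := nonneg_of_hasDerivAt_nonneg (f := fun x ↦ x - x ^ 3 / 6 + x ^ 5 / 120 - sin x)
    (fun x ↦ (((hasDerivAt_id x).sub ((hasDerivAt_pow 3 x).div_const 6)).add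
      ((hasDerivAt_pow 5 x).div_const 120)).sub (hasDerivAt_sin x))
    (fun x hx ↦ by nlinarith [cos_le_one_sub_sq_div_two_add_pow_four hx]) (by simp) ht
  linarith

theorem abs_sinc_sub_one_sub_sq_div_six_le (t : ℝ) :
    |sinc t - (1 - t ^ 2 / 6)| ≤ t ^ 4 / 120 := by
  wlog ht : 0 ≤ t
  · simpa [Even.neg_pow (by decide : Even 4)] using this (-t) (by linarith)
  rcases ht.eq_or_lt with rfl | ht
  · simp
  rw [sinc_of_ne_zero ht.ne', abs_le, le_sub_iff_add_le, sub_le_iff_le_add, le_div_iff₀ ht,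
    div_le_iff₀ ht]
  constructor <;> nlinarith [sin_ge_sub_cube ht.le, sin_le_sub_cube_add_pow_five ht.le]

theorem abs_exp_neg_sub_one_sub_sq_div_six_le {t : ℝ} (ht : t ^ 2 ≤ 6) :
    |exp (-(t ^ 2 / 6)) - (1 - t ^ 2 / 6)| ≤ t ^ 4 / 36 := by
  have h := abs_exp_sub_one_sub_id_le (x := -(t ^ 2 / 6))
    (by rw [abs_neg, abs_of_nonneg (by positivity)]; linarith)
  calc _ = |exp (-(t ^ 2 / 6)) - 1 - -(t ^ 2 / 6)| := by ring_nf
    _ ≤ (-(t ^ 2 / 6)) ^ 2 := h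
    _ = t ^ 4 / 36 := by ring

theorem abs_sinc_sub_exp_neg_le {t : ℝ} (ht : t ^ 2 ≤ 6) :
    |sinc t - exp (-(t ^ 2 / 6))| ≤ t ^ 4 / 20 := by
  have hsinc := abs_sinc_sub_one_sub_sq_div_six_le t
  have hexp := abs_exp_neg_sub_one_sub_sq_div_six_le ht
  calc _ ≤ |sinc t - (1 - t ^ 2 / 6)| + |(1 - t ^ 2 / 6) - exp (-(t ^ 2 / 6))| := abs_sub_le ..
    _ ≤ t ^ 4 / 20 := by rw [abs_sub_comm (1 - _)]; nlinarith [pow_nonneg (sq_nonneg t) 2]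

theorem abs_sinc_pow_sub_exp_le {t : ℝ} (ht : t ^ 2 ≤ 6) (n : ℕ) :
    |sinc t ^ n - exp (-(n * t ^ 2 / 6))| ≤ n * t ^ 4 / 20 := by
  have hexp : exp (-(n * t ^ 2 / 6)) = exp (-(t ^ 2 / 6)) ^ n := by
    rw [← exp_nat_mul]; ring_nf
  rw [hexp, mul_div_assoc]
  have hexp_le : |exp (-(t ^ 2 / 6))| ≤ 1 := by
    rw [abs_of_pos (exp_pos _), exp_le_one_iff]; linarith [sq_nonneg t]
  exact (abs_pow_sub_pow_le_of_abs_le_one (abs_sinc_le_one t) hexp_le n).trans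
    (by gcongr; exact abs_sinc_sub_exp_neg_le ht)

end Real

theorem sinc_pow_gaussian_rate :
    ∃ C : ℝ, 0 < C ∧ ∀ d : ℕ, 1 ≤ d → ∀ x : ℝ, 0 ≤ x → x ≤ 1 →
      |_root_.sinc ((x / 2) * Real.sqrt (12 / (d : ℝ))) ^ d - Real.exp (-(x ^ 2) / 2)| ≤
        C / d := by
  refine ⟨1, one_pos, fun d hd x hx hx1 ↦ ?_⟩
  have hd : (1 : ℝ) ≤ d := by exact_mod_cast hd
  set t := (x / 2) * Real.sqrt (12 / (d : ℝ))
  have ht : t ^ 2 = 3 * x ^ 2 / d := by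
    rw [mul_pow, sq_sqrt (by positivity)]; ring
  have hx2 : x ^ 2 ≤ 1 := pow_le_one₀ hx hx1
  have hx4 : x ^ 4 ≤ 1 := pow_le_one₀ hx hx1
  have ht6 : t ^ 2 ≤ 6 := by
    rw [ht, div_le_iff₀ (by positivity)]; nlinarith
  have hgauss : -(x ^ 2) / 2 = -(d * t ^ 2 / 6) := by
    rw [ht]; field_simp; ring
  calc _ = |Real.sinc t ^ d - exp (-(d * t ^ 2 / 6))| := by rw [hgauss]; rfl
    _ ≤ d * t ^ 4 / 20 := abs_sinc_pow_sub_exp_le ht6 d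
    _ = 9 * x ^ 4 / (20 * d) := by
        rw [show t ^ 4 = (t ^ 2) ^ 2 by ring, ht]; field_simp; ring
    _ ≤ 1 / d := by
        rw [div_le_div_iff₀ (by positivity) (by positivity)]; nlinarith
end

section
/- For all integers d ≥ 1, 1 ≤ j ≤ d and 1 ≤ k ≤ d−1, the refined Eulerian number satisfies 𝐀_{d,k,j} = Σ_{i=0}^{k} C(d,i) · (−1)^i · (k−i)^{d−j} · (k−i+1)^{j−1}. -/
open MeasureTheory Real Filter Finset

/-- Refined Eulerian number `𝐀_{d,k,j}`: the number of permutations of `{1, …, d}` with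
exactly `k` descents and last entry equal to `j`. -/
def refinedEulerian (d : ℕ) (k : ℤ) (j : ℕ) : ℕ :=
  if h : 0 < d then
    (Finset.univ.filter fun σ : Equiv.Perm (Fin d) =>
      (numDescents σ : ℤ) = k ∧ ((σ ⟨d - 1, Nat.sub_lt h one_pos⟩ : ℕ) + 1 = j)).card
  else 0

/-!
Removing the last entry `j` of `σ ∈ S_d` and standardising the remaining entries gives
`τ ∈ S_{d-1}`, and for fixed `j` this is a bijection. The descents of `σ` are those of `τ`,
plus one at position `d - 1` exactly when `j ≤ τ(d - 1)`. Hence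
`𝐀_{d,k,j} = ∑_{j' < j} 𝐀_{d-1,k,j'} + ∑_{j' ≥ j} 𝐀_{d-1,k-1,j'}`.
The explicit formula satisfies the same recursion: summed over a range of `j`,
`a^(d-j) (a+1)^(j-1)` telescopes because `(a+1) - a = 1`, and Pascal's rule
`C(d,i) = C(d-1,i) + C(d-1,i-1)` recombines the two sums. Both sides agree for `d = 1`.
-/

open Equiv

namespace RefinedEulerian

section Insertion

variable {n : ℕ}

def insertLast (j : Fin (n + 1)) (τ : Perm (Fin n)) : Perm (Fin (n + 1)) :=
  (finSuccEquiv' (Fin.last n)).trans ((optionCongr τ).trans (finSuccEquiv' j).symm)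

@[simp] lemma insertLast_last (j : Fin (n + 1)) (τ : Perm (Fin n)) :
    insertLast j τ (Fin.last n) = j := by
  simp [insertLast]

@[simp] lemma insertLast_castSucc (j : Fin (n + 1)) (τ : Perm (Fin n)) (i : Fin n) :
    insertLast j τ i.castSucc = j.succAbove (τ i) := by
  simp [insertLast, ← Fin.succAbove_last]

lemma insertLast_injective :
    Function.Injective fun p : Fin (n + 1) × Perm (Fin n) => insertLast p.1 p.2 := by
  rintro ⟨j, τ⟩ ⟨j', τ'⟩ h
  obtain rfl : j = j' := by simpa using congr($h (Fin.last n))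
  refine Prod.ext rfl (Equiv.ext fun i => Fin.succAbove_right_injective (p := j) ?_)
  simpa using congr($h i.castSucc)

lemma insertLast_bijective :
    Function.Bijective fun p : Fin (n + 1) × Perm (Fin n) => insertLast p.1 p.2 := by
  rw [Fintype.bijective_iff_injective_and_card]
  exact ⟨insertLast_injective, by simp [Fintype.card_perm, Nat.factorial_succ]⟩

lemma card_filter_and_apply_last_eq (P : Perm (Fin (n + 1)) → Prop) [DecidablePred P]
    (j : Fin (n + 1)) :
    #{σ | P σ ∧ σ (Fin.last n) = j} = #{τ : Perm (Fin n) | P (insertLast j τ)} := by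
  symm
  refine card_nbij (insertLast j) (fun τ hτ => by simpa using hτ)
    (fun τ _ τ' _ h =>
      congr_arg Prod.snd (insertLast_injective (a₁ := (j, τ)) (a₂ := (j, τ')) h))
    (fun σ hσ => ?_)
  obtain ⟨⟨j', τ⟩, rfl⟩ := insertLast_bijective.2 σ
  obtain ⟨hP, rfl⟩ : P (insertLast j' τ) ∧ j' = j := by simpa using hσ
  exact ⟨τ, by simpa using hP, rfl⟩

end Insertion

lemma numDescents_eq_card {n : ℕ} (σ : Perm (Fin (n + 1))) :
    numDescents σ = #{i : Fin n | σ i.succ < σ i.castSucc} := by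
  have hsucc (i : Fin n) :
      (⟨((i : ℕ) + 1) % (n + 1), Nat.mod_lt _ n.succ_pos⟩ : Fin (n + 1)) = i.succ :=
    Fin.ext (Nat.mod_eq_of_lt (by omega))
  rw [numDescents, card_filter, card_filter, Fin.sum_univ_castSucc]
  simp [hsucc]

lemma numDescents_insertLast {n : ℕ} (j : Fin (n + 2)) (τ : Perm (Fin (n + 1))) :
    numDescents (insertLast j τ) =
      numDescents τ + if j ≤ (τ (Fin.last n)).castSucc then 1 else 0 := by
  rw [numDescents_eq_card, numDescents_eq_card, card_filter, card_filter, Fin.sum_univ_castSucc]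
  simp [Fin.succ_castSucc, -Fin.castSucc_succ, Fin.lt_succAbove_iff_le_castSucc]

def refinedCount (n k : ℕ) (j : Fin (n + 1)) : ℕ :=
  #{σ : Perm (Fin (n + 1)) | numDescents σ = k ∧ σ (Fin.last n) = j}

lemma refinedCount_zero (k : ℕ) (j : Fin 1) : refinedCount 0 k j = if k = 0 then 1 else 0 := by
  simp [refinedCount, numDescents_eq_card, Subsingleton.elim _ j, eq_comm, apply_ite]

lemma refinedCount_succ (n k : ℕ) (j : Fin (n + 2)) :
    refinedCount (n + 1) k j = ∑ j' : Fin (n + 1),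
      #{τ : Perm (Fin (n + 1)) |
        numDescents τ + (if j ≤ j'.castSucc then 1 else 0) = k ∧ τ (Fin.last n) = j'} := by
  rw [refinedCount, card_filter_and_apply_last_eq (numDescents · = k),
    card_eq_sum_card_fiberwise (f := fun τ => τ (Fin.last n)) (t := univ) (by simp)]
  refine sum_congr rfl fun j' _ => ?_
  simp only [numDescents_insertLast, filter_filter]
  congr 1
  exact filter_congr fun τ _ => by constructor <;> rintro ⟨h, rfl⟩ <;> exact ⟨h, rfl⟩

lemma refinedCount_succ_zero (n : ℕ) (j : Fin (n + 2)) :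
    refinedCount (n + 1) 0 j =
      ∑ j' : Fin (n + 1), if j ≤ j'.castSucc then 0 else refinedCount n 0 j' := by
  rw [refinedCount_succ]
  refine sum_congr rfl fun j' _ => ?_
  split_ifs <;> simp [refinedCount]

lemma refinedCount_succ_succ (n k : ℕ) (j : Fin (n + 2)) :
    refinedCount (n + 1) (k + 1) j =
      ∑ j' : Fin (n + 1),
        if j ≤ j'.castSucc then refinedCount n k j' else refinedCount n (k + 1) j' := by
  rw [refinedCount_succ]
  refine sum_congr rfl fun j' _ => ?_
  split_ifs <;> simp [refinedCount]

lemma sum_Ico_pow_mul_pow {R : Type*} [CommRing R] (a : R) {n m : ℕ} (hm : m ≤ n + 1) :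
    ∑ i ∈ Ico m (n + 1), a ^ (n - i) * (a + 1) ^ i =
      (a + 1) ^ (n + 1) - a ^ (n + 1 - m) * (a + 1) ^ m := by
  simpa [mul_comm] using (Commute.all (a + 1) a).geom_sum₂_Ico_mul hm

lemma sum_range_pow_mul_pow {R : Type*} [CommRing R] (a : R) {n m : ℕ} (hm : m ≤ n + 1) :
    ∑ i ∈ range m, a ^ (n - i) * (a + 1) ^ i = a ^ (n + 1 - m) * (a + 1) ^ m - a ^ (n + 1) := by
  have hfull := sum_Ico_pow_mul_pow a (Nat.zero_le (n + 1))
  rw [← range_eq_Ico, ← sum_range_add_sum_Ico _ hm, sum_Ico_pow_mul_pow a hm] at hfull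
  simp only [Nat.sub_zero, pow_zero, mul_one] at hfull
  linear_combination hfull

def altChooseConv (N k : ℕ) (f : ℤ → ℤ) : ℤ :=
  ∑ i ∈ range (k + 1), (N.choose i : ℤ) * (-1) ^ i * f (k - i)

section altChooseConv

variable {N k : ℕ}

@[simp] lemma altChooseConv_zero (f : ℤ → ℤ) : altChooseConv N 0 f = f 0 := by
  simp [altChooseConv]

lemma altChooseConv_sub (f g : ℤ → ℤ) :
    altChooseConv N k (fun a => f a - g a) = altChooseConv N k f - altChooseConv N k g := by
  simp [altChooseConv, mul_sub]

lemma altChooseConv_sum {ι : Type*} (s : Finset ι) (f : ι → ℤ → ℤ) :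
    altChooseConv N k (fun a => ∑ x ∈ s, f x a) = ∑ x ∈ s, altChooseConv N k (f x) := by
  simp only [altChooseConv, mul_sum]
  exact sum_comm

lemma altChooseConv_succ_of_map_zero {f : ℤ → ℤ} (hf : f 0 = 0) :
    altChooseConv N (k + 1) f = altChooseConv N k (fun a => f (a + 1)) := by
  rw [altChooseConv, sum_range_succ]
  simp [hf, altChooseConv, sub_add_eq_add_sub]

lemma altChooseConv_succ_succ (f : ℤ → ℤ) :
    altChooseConv (N + 1) (k + 1) f = altChooseConv N (k + 1) f - altChooseConv N k f := by
  simp only [altChooseConv]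
  rw [sum_range_succ' _ (k + 1), sum_range_succ' _ (k + 1)]
  simp [Nat.choose_succ_succ', pow_succ, add_mul, sum_add_distrib]
  ring

lemma altChooseConv_one_const (k : ℕ) :
    altChooseConv 1 k (fun _ => 1) = if k = 0 then 1 else 0 := by
  cases k <;> simp [altChooseConv, mul_comm, Int.alternating_sum_range_choose_eq_choose]

end altChooseConv

def eulerianFormula (n k m : ℕ) : ℤ :=
  altChooseConv (n + 1) k fun a => a ^ (n - m) * (a + 1) ^ m

section eulerianFormula

variable {n m : ℕ}

lemma sum_range_eulerianFormula (k : ℕ) (hm : m ≤ n + 1) :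
    ∑ i ∈ range m, eulerianFormula n k i =
      altChooseConv (n + 1) k (fun a => a ^ (n + 1 - m) * (a + 1) ^ m) -
        altChooseConv (n + 1) k (· ^ (n + 1)) := by
  simp only [eulerianFormula, ← altChooseConv_sum, sum_range_pow_mul_pow _ hm, altChooseConv_sub]

lemma sum_Ico_eulerianFormula (k : ℕ) (hm : m ≤ n + 1) :
    ∑ i ∈ Ico m (n + 1), eulerianFormula n k i =
      altChooseConv (n + 1) k (fun a => (a + 1) ^ (n + 1)) -
        altChooseConv (n + 1) k (fun a => a ^ (n + 1 - m) * (a + 1) ^ m) := by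
  simp only [eulerianFormula, ← altChooseConv_sum, sum_Ico_pow_mul_pow _ hm, altChooseConv_sub]

lemma eulerianFormula_zero (k : ℕ) : eulerianFormula 0 k 0 = if k = 0 then 1 else 0 := by
  simp [eulerianFormula, altChooseConv_one_const]

lemma eulerianFormula_succ_zero (hm : m ≤ n + 1) :
    eulerianFormula (n + 1) 0 m = ∑ i ∈ range m, eulerianFormula n 0 i := by
  rw [sum_range_eulerianFormula 0 hm]
  simp [eulerianFormula]

lemma eulerianFormula_succ_succ (k : ℕ) (hm : m ≤ n + 1) :
    eulerianFormula (n + 1) (k + 1) m =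
      ∑ i ∈ range m, eulerianFormula n (k + 1) i +
        ∑ i ∈ Ico m (n + 1), eulerianFormula n k i := by
  rw [sum_range_eulerianFormula _ hm, sum_Ico_eulerianFormula _ hm,
    altChooseConv_succ_of_map_zero (f := (· ^ (n + 1))) (by simp), eulerianFormula,
    altChooseConv_succ_succ]
  ring

end eulerianFormula

lemma sum_ite_le_castSucc {M : Type*} [AddCommMonoid M] {n : ℕ} (j : Fin (n + 2))
    (f g : ℕ → M) :
    ∑ j' : Fin (n + 1), (if j ≤ j'.castSucc then f j' else g j') =
      ∑ m ∈ range j, g m + ∑ m ∈ Ico (j : ℕ) (n + 1), f m := by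
  simp only [Fin.le_def, Fin.val_castSucc]
  rw [Fin.sum_univ_eq_sum_range (fun m => if (j : ℕ) ≤ m then f m else g m),
    ← sum_range_add_sum_Ico _ j.is_le]
  congr 1
  · exact sum_congr rfl fun m hm => if_neg (by simpa using hm)
  · exact sum_congr rfl fun m hm => if_pos (mem_Ico.1 hm).1

theorem refinedCount_eq_eulerianFormula (n k : ℕ) (j : Fin (n + 1)) :
    (refinedCount n k j : ℤ) = eulerianFormula n k j := by
  induction n generalizing k with
  | zero => simp [Fin.fin_one_eq_zero j, refinedCount_zero, eulerianFormula_zero, apply_ite]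
  | succ n ih =>
    cases k with
    | zero =>
      rw [refinedCount_succ_zero, eulerianFormula_succ_zero j.is_le]
      push_cast
      simp_rw [ih]
      rw [sum_ite_le_castSucc j (fun _ => 0) (eulerianFormula n 0)]
      simp
    | succ k =>
      rw [refinedCount_succ_succ, eulerianFormula_succ_succ k j.is_le]
      push_cast
      simp_rw [ih]
      exact sum_ite_le_castSucc j (eulerianFormula n k) (eulerianFormula n (k + 1))

lemma refinedEulerian_succ_eq_refinedCount (n k : ℕ) (j : Fin (n + 1)) :
    refinedEulerian (n + 1) k (j + 1) = refinedCount n k j := by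
  simp only [refinedEulerian, refinedCount, dif_pos n.succ_pos, Nat.cast_inj]
  congr 1
  refine filter_congr fun σ _ => and_congr_right fun _ => ?_
  rw [Fin.ext_iff]
  simp [Fin.last]

end RefinedEulerian

theorem refined_eulerian_explicit_general (d k j : ℕ) (hj1 : 1 ≤ j) (hjd : j ≤ d) :
    (refinedEulerian d (k : ℤ) j : ℤ) =
      ∑ i ∈ Finset.range (k + 1),
        (d.choose i : ℤ) * (-1 : ℤ) ^ i * ((k : ℤ) - (i : ℤ)) ^ (d - j) *
          ((k : ℤ) - (i : ℤ) + 1) ^ (j - 1) := by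
  obtain ⟨n, rfl⟩ : ∃ n, d = n + 1 := ⟨d - 1, by omega⟩
  obtain ⟨m, rfl⟩ : ∃ m, j = m + 1 := ⟨j - 1, by omega⟩
  rw [RefinedEulerian.refinedEulerian_succ_eq_refinedCount n k ⟨m, by omega⟩,
    RefinedEulerian.refinedCount_eq_eulerianFormula]
  simp [RefinedEulerian.eulerianFormula, RefinedEulerian.altChooseConv, mul_assoc]

theorem refined_eulerian_explicit (d k j : ℕ) (hd : 1 ≤ d) (hj1 : 1 ≤ j) (hjd : j ≤ d)
    (hk1 : 1 ≤ k) (hkd : k ≤ d - 1) :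
    (refinedEulerian d (k : ℤ) j : ℤ) =
      ∑ i ∈ Finset.range (k + 1),
        (d.choose i : ℤ) * (-1 : ℤ) ^ i * ((k : ℤ) - (i : ℤ)) ^ (d - j) *
          ((k : ℤ) - (i : ℤ) + 1) ^ (j - 1) :=
  refined_eulerian_explicit_general d k j hj1 hjd
end
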